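/- arXiv:1508.03876 — 2 statements merged into one kernel-verified Lean document; each statement's English description precedes it below -/
import Mathlib

section
/- For every n ≥ 1, the complex of injective words on n letters is (n−1)-spherical: the augmented chain complex whose i-th term (for 0 ≤ i ≤ n−1) is the free abelian group on the set of injective (i+1)-tuples of elements of Fin n, with boundary map given by the alternating sum of deleting one entry, d(v_0, …, v_i) = Σ_{j=0}^{i} (−1)^j (v_0, …, v_{j-1}, v_{j+1}, …, v_i), and with augmentation sending each 1-tuple to 1 ∈ ℤ in degree −1, is exact in every degree except n−1; that is, its reduced homology H̃_i vanishes for all i ≠ n−1. -/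
open CategoryTheory

/-- Commutation rule for deleting two entries of a list. -/
theorem eraseIdx_eraseIdx_comm {α : Type*} :
    ∀ (l : List α) (i j : ℕ), i ≤ j →
      (l.eraseIdx i).eraseIdx j = (l.eraseIdx (j + 1)).eraseIdx i := by
  intro l
  induction l with
  | nil => intro i j _; simp
  | cons a t ih =>
    intro i j hij
    match i, j with
    | 0, j => simp
    | i + 1, j + 1 =>
      simp only [List.eraseIdx_cons_succ]
      rw [ih i j (by omega)]

variable {α : Type} (P : List α → Prop) (hP : ∀ (l : List α) (j : ℕ), P l → P (l.eraseIdx j))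

/-- Words (ordered tuples) of length `d` satisfying the admissibility predicate `P`:
the basis of the degree-`d` term of the augmented chain complex (a word of length `d`
is a `(d-1)`-simplex, the empty word generating the augmentation `ℤ` in degree `-1`). -/
def Word (d : ℕ) : Type := {l : List α // P l ∧ l.length = d}

/-- Deletion of the `j`-th entry of a word. -/
def eraseWord {d : ℕ} (l : Word P (d + 1)) (j : Fin (d + 1)) : Word P d :=
  ⟨l.1.eraseIdx j, hP l.1 j l.2.1, by
    have h := l.2.2
    rw [List.length_eraseIdx_of_lt (by omega)]
    omega⟩

/-- The boundary map: the alternating sum of the entry deletions. -/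
noncomputable def wordBoundary (d : ℕ) : (Word P (d + 1) →₀ ℤ) →ₗ[ℤ] (Word P d →₀ ℤ) :=
  Finsupp.lsum ℤ fun l =>
    ∑ j : Fin (d + 1), ((-1 : ℤ) ^ (j : ℕ)) • Finsupp.lsingle (eraseWord P hP l j)

theorem wordBoundary_single {d : ℕ} (l : Word P (d + 1)) (b : ℤ) :
    wordBoundary P hP d (Finsupp.single l b)
      = ∑ j : Fin (d + 1), ((-1 : ℤ) ^ (j : ℕ)) • Finsupp.single (eraseWord P hP l j) b := by
  simp [wordBoundary, Finsupp.lsum_single, LinearMap.sum_apply, LinearMap.smul_apply,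
    Finsupp.lsingle_apply]

/-- The sign-reversing involution on pairs of deletion indices, pairing
`(j, i)` (first delete entry `j`, then entry `i`) with the pair of indices deleting
the same two entries in the other order. -/
def deletionInvolution (d : ℕ) :
    Fin (d + 2) × Fin (d + 1) → Fin (d + 2) × Fin (d + 1) := fun p =>
  if h : (p.2 : ℕ) < (p.1 : ℕ)
  then (⟨(p.2 : ℕ), by have := p.2.2; omega⟩, ⟨(p.1 : ℕ) - 1, by have := p.1.2; omega⟩)
  else (⟨(p.2 : ℕ) + 1, by have := p.2.2; omega⟩, ⟨(p.1 : ℕ), by have := p.2.2; omega⟩)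

theorem deletionInvolution_of_lt {d : ℕ} {j : Fin (d + 2)} {i : Fin (d + 1)}
    (h : (i : ℕ) < (j : ℕ)) :
    deletionInvolution d (j, i)
      = (⟨(i : ℕ), by have := i.2; omega⟩, ⟨(j : ℕ) - 1, by have := j.2; omega⟩) := by
  simp only [deletionInvolution]
  exact dif_pos h

theorem deletionInvolution_of_ge {d : ℕ} {j : Fin (d + 2)} {i : Fin (d + 1)}
    (h : ¬ (i : ℕ) < (j : ℕ)) :
    deletionInvolution d (j, i)
      = (⟨(i : ℕ) + 1, by have := i.2; omega⟩, ⟨(j : ℕ), by have := i.2; omega⟩) := by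
  simp only [deletionInvolution]
  exact dif_neg h

theorem wordBoundary_comp_wordBoundary (d : ℕ) :
    (wordBoundary P hP d).comp (wordBoundary P hP (d + 1)) = 0 := by
  apply Finsupp.lhom_ext
  intro l b
  rw [LinearMap.comp_apply, wordBoundary_single, map_sum, LinearMap.zero_apply]
  set f : Fin (d + 2) × Fin (d + 1) → (Word P d →₀ ℤ) := fun p =>
    (((-1 : ℤ) ^ (p.1 : ℕ)) * ((-1 : ℤ) ^ (p.2 : ℕ))) •
      Finsupp.single (eraseWord P hP (eraseWord P hP l p.1) p.2) b with hf
  have step : ∀ j : Fin (d + 2),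
      wordBoundary P hP d (((-1 : ℤ) ^ (j : ℕ)) • Finsupp.single (eraseWord P hP l j) b)
        = ∑ i : Fin (d + 1), f (j, i) := by
    intro j
    simp only [hf]
    rw [map_smul, wordBoundary_single, Finset.smul_sum]
    exact Finset.sum_congr rfl fun i _ => smul_smul _ _ _
  rw [Finset.sum_congr rfl (fun j _ => step j), ← Fintype.sum_prod_type]
  apply Finset.sum_ninvolution (deletionInvolution d)
  · -- the two terms of a matched pair cancel
    rintro ⟨j, i⟩
    by_cases h : (i : ℕ) < (j : ℕ)
    · rw [deletionInvolution_of_lt h]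
      simp only [hf]
      have hword : eraseWord P hP (eraseWord P hP l ⟨(i : ℕ), by have := i.2; omega⟩)
            ⟨(j : ℕ) - 1, by have := j.2; omega⟩
          = eraseWord P hP (eraseWord P hP l j) i := by
        apply Subtype.ext
        show (l.1.eraseIdx (i : ℕ)).eraseIdx ((j : ℕ) - 1) = (l.1.eraseIdx (j : ℕ)).eraseIdx i
        rw [eraseIdx_eraseIdx_comm l.1 (i : ℕ) ((j : ℕ) - 1) (by omega)]
        congr 2
        omega
      rw [hword, ← add_smul]
      have hcoef : ((-1 : ℤ) ^ (j : ℕ) * (-1 : ℤ) ^ (i : ℕ)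
          + (-1 : ℤ) ^ (i : ℕ) * (-1 : ℤ) ^ ((j : ℕ) - 1)) = 0 := by
        obtain ⟨m, hm⟩ : ∃ m, (j : ℕ) = m + 1 := ⟨(j : ℕ) - 1, by omega⟩
        rw [hm]
        simp only [Nat.add_sub_cancel]
        rw [pow_succ]
        ring
      rw [hcoef, zero_smul]
    · rw [deletionInvolution_of_ge h]
      simp only [hf]
      have hword : eraseWord P hP (eraseWord P hP l ⟨(i : ℕ) + 1, by have := i.2; omega⟩)
            ⟨(j : ℕ), by have := i.2; omega⟩
          = eraseWord P hP (eraseWord P hP l j) i := by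
        apply Subtype.ext
        show (l.1.eraseIdx ((i : ℕ) + 1)).eraseIdx (j : ℕ) = (l.1.eraseIdx (j : ℕ)).eraseIdx i
        rw [← eraseIdx_eraseIdx_comm l.1 (j : ℕ) (i : ℕ) (by omega)]
      rw [hword, ← add_smul]
      have hcoef : ((-1 : ℤ) ^ (j : ℕ) * (-1 : ℤ) ^ (i : ℕ)
          + (-1 : ℤ) ^ ((i : ℕ) + 1) * (-1 : ℤ) ^ (j : ℕ)) = 0 := by
        rw [pow_succ]
        ring
      rw [hcoef, zero_smul]
  · -- the involution has no fixed point with nonzero contribution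
    rintro ⟨j, i⟩ _
    by_cases h : (i : ℕ) < (j : ℕ)
    · rw [deletionInvolution_of_lt h]
      intro hcon
      have h1 : (i : ℕ) = (j : ℕ) :=
        congrArg (fun q : Fin (d + 2) × Fin (d + 1) => (q.1 : ℕ)) hcon
      omega
    · rw [deletionInvolution_of_ge h]
      intro hcon
      have h1 : (i : ℕ) + 1 = (j : ℕ) :=
        congrArg (fun q : Fin (d + 2) × Fin (d + 1) => (q.1 : ℕ)) hcon
      have h2 : (j : ℕ) = (i : ℕ) :=
        congrArg (fun q : Fin (d + 2) × Fin (d + 1) => (q.2 : ℕ)) hcon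
      omega
  · intro a; exact Finset.mem_univ _
  · -- the pairing is an involution
    rintro ⟨j, i⟩
    by_cases h : (i : ℕ) < (j : ℕ)
    · rw [deletionInvolution_of_lt h, deletionInvolution_of_ge (by simp; omega)]
      apply Prod.ext
      · apply Fin.ext; simp; omega
      · apply Fin.ext; simp
    · rw [deletionInvolution_of_ge h, deletionInvolution_of_lt (by simp; omega)]
      apply Prod.ext
      · apply Fin.ext; simp
      · apply Fin.ext; simp

/-- The augmented chain complex of admissible words: in degree `d` the free abelian group
on words of length `d` (so degree `0` is the augmentation copy of `ℤ`, spanned by the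
empty word, and a word of length `d` is a simplex of dimension `d - 1`), with boundary
the alternating sum of entry deletions. -/
noncomputable def wordComplex : ChainComplex (ModuleCat ℤ) ℕ :=
  ChainComplex.of (fun d => ModuleCat.of ℤ (Word P d →₀ ℤ))
    (fun d => ModuleCat.ofHom (wordBoundary P hP d))
    (fun d => by
      have h := wordBoundary_comp_wordBoundary P hP d
      exact ModuleCat.hom_ext (LinearMap.ext fun x => DFunLike.congr_fun h x))

/-! Prepending a letter `a` is a contracting homotopy `h` of the subcomplex spanned by the words
avoiding `a`. Hence `id - (∂h + h∂)` kills those words, while it sends a word containing `a` to a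
combination of rearrangements of that word. On cycles it differs from the identity by a boundary,
so applying it for every letter in turn shows that a cycle of length `d` is homologous to one
supported on words containing every letter, which is zero when `d` is less than the number of
letters. In length `0` the homotopy alone shows that the augmentation is onto, and above length `n`
there are no injective words at all. -/

theorem perm_cons_eraseIdx {a : α} {l : List α} {k : ℕ} (hk : k < l.length)
    (hm : a ∈ l) (hnm : a ∉ l.eraseIdx k) : (a :: l.eraseIdx k).Perm l := by
  have hperm := List.getElem_cons_eraseIdx_perm hk
  obtain rfl : a = l[k] := by
    simpa [hnm] using hperm.mem_iff.2 hm
  exact hperm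

section Contraction

variable (hcons : ∀ (a : α) (l : List α), P l → a ∉ l → P (a :: l))

def consWord {d : ℕ} (a : α) (w : Word P d) (hm : a ∉ w.1) : Word P (d + 1) :=
  ⟨a :: w.1, hcons a w.1 w.2.1 hm, by simp [w.2.2]⟩

open Classical in
noncomputable def prependMap (a : α) (d : ℕ) :
    (Word P d →₀ ℤ) →ₗ[ℤ] (Word P (d + 1) →₀ ℤ) :=
  Finsupp.lsum ℤ fun w =>
    if hm : a ∈ w.1 then 0 else Finsupp.lsingle (consWord P hcons a w hm)

theorem prependMap_single_of_not_mem {a : α} {d : ℕ} {w : Word P d} (hm : a ∉ w.1) (c : ℤ) :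
    prependMap P hcons a d (Finsupp.single w c)
      = Finsupp.single (consWord P hcons a w hm) c := by
  simp [prependMap, Finsupp.lsum_single, hm]

theorem prependMap_single_of_mem {a : α} {d : ℕ} {w : Word P d} (hm : a ∈ w.1) (c : ℤ) :
    prependMap P hcons a d (Finsupp.single w c) = 0 := by
  simp [prependMap, Finsupp.lsum_single, hm]

theorem not_mem_eraseWord {d : ℕ} {a : α} {w : Word P (d + 1)} (hm : a ∉ w.1)
    (k : Fin (d + 1)) : a ∉ (eraseWord P hP w k).1 :=
  fun h => hm ((List.eraseIdx_sublist _ _).subset h)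

theorem eraseWord_consWord_zero {d : ℕ} (a : α) (w : Word P d) (hm : a ∉ w.1) :
    eraseWord P hP (consWord P hcons a w hm) 0 = w :=
  rfl

theorem eraseWord_consWord_succ {d : ℕ} (a : α) (w : Word P (d + 1)) (hm : a ∉ w.1)
    (k : Fin (d + 1)) :
    eraseWord P hP (consWord P hcons a w hm) k.succ
      = consWord P hcons a (eraseWord P hP w k) (not_mem_eraseWord P hP hm k) :=
  rfl

theorem wordBoundary_zero_prependMap (a : α) (z : Word P 0 →₀ ℤ) :
    wordBoundary P hP 0 (prependMap P hcons a 0 z) = z := by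
  induction z using Finsupp.induction_linear with
  | zero => simp
  | add x y hx hy => rw [map_add, map_add, hx, hy]
  | single w c =>
    have hm : a ∉ w.1 := by simp [List.length_eq_zero_iff.1 w.2.2]
    rw [prependMap_single_of_not_mem P hcons hm, wordBoundary_single, Fin.sum_univ_one,
      eraseWord_consWord_zero, Fin.val_zero, pow_zero, one_smul]

theorem wordBoundary_prependMap_add_prependMap_wordBoundary {a : α} {e : ℕ}
    {w : Word P (e + 1)} (hm : a ∉ w.1) (c : ℤ) :
    wordBoundary P hP (e + 1) (prependMap P hcons a (e + 1) (Finsupp.single w c))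
      + prependMap P hcons a e (wordBoundary P hP e (Finsupp.single w c))
      = Finsupp.single w c := by
  have hprepend : prependMap P hcons a e (wordBoundary P hP e (Finsupp.single w c))
      = ∑ k : Fin (e + 1), ((-1 : ℤ) ^ (k : ℕ)) •
          Finsupp.single
            (consWord P hcons a (eraseWord P hP w k) (not_mem_eraseWord P hP hm k)) c := by
    simp only [wordBoundary_single, map_sum, map_smul,
      prependMap_single_of_not_mem P hcons (not_mem_eraseWord P hP hm _)]
  rw [hprepend, prependMap_single_of_not_mem P hcons hm, wordBoundary_single, Fin.sum_univ_succ]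
  simp only [eraseWord_consWord_zero, eraseWord_consWord_succ, Fin.val_zero, Fin.val_succ,
    pow_zero, one_smul, pow_succ, mul_neg_one, neg_smul, Finset.sum_neg_distrib]
  abel

noncomputable def prependDefect (a : α) (e : ℕ) :
    (Word P (e + 1) →₀ ℤ) →ₗ[ℤ] (Word P (e + 1) →₀ ℤ) :=
  LinearMap.id - (wordBoundary P hP (e + 1) ∘ₗ prependMap P hcons a (e + 1)
    + prependMap P hcons a e ∘ₗ wordBoundary P hP e)

theorem prependDefect_single_of_not_mem {a : α} {e : ℕ} {w : Word P (e + 1)} (hm : a ∉ w.1)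
    (c : ℤ) : prependDefect P hP hcons a e (Finsupp.single w c) = 0 := by
  simp only [prependDefect, LinearMap.sub_apply, LinearMap.add_apply, LinearMap.comp_apply,
    LinearMap.id_apply, wordBoundary_prependMap_add_prependMap_wordBoundary P hP hcons hm,
    sub_self]

theorem prependDefect_single_mem_supported_perm {a : α} {e : ℕ} {w : Word P (e + 1)}
    (hm : a ∈ w.1) (c : ℤ) :
    prependDefect P hP hcons a e (Finsupp.single w c)
      ∈ Finsupp.supported ℤ ℤ {v : Word P (e + 1) | v.1.Perm w.1} := by
  simp only [prependDefect, LinearMap.sub_apply, LinearMap.add_apply, LinearMap.comp_apply,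
    LinearMap.id_apply, prependMap_single_of_mem P hcons hm, map_zero, zero_add,
    wordBoundary_single, map_sum, map_smul]
  refine Submodule.sub_mem _ (Finsupp.single_mem_supported ℤ c (List.Perm.refl _)) ?_
  refine Submodule.sum_mem _ fun k _ => Submodule.smul_mem _ _ ?_
  by_cases hk : a ∈ (eraseWord P hP w k).1
  · rw [prependMap_single_of_mem P hcons hk]
    exact Submodule.zero_mem _
  · rw [prependMap_single_of_not_mem P hcons hk]
    exact Finsupp.single_mem_supported ℤ c
      (perm_cons_eraseIdx (by rw [w.2.2]; exact k.2) hm hk)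

def wordsContaining (d : ℕ) (T : List α) : Set (Word P d) :=
  {v | ∀ b ∈ T, b ∈ v.1}

theorem prependDefect_mem_supported_wordsContaining_cons {a : α} {e : ℕ} {T : List α}
    {z : Word P (e + 1) →₀ ℤ} (hz : z ∈ Finsupp.supported ℤ ℤ (wordsContaining P (e + 1) T)) :
    prependDefect P hP hcons a e z
      ∈ Finsupp.supported ℤ ℤ (wordsContaining P (e + 1) (a :: T)) := by
  have hle : Finsupp.supported ℤ ℤ (wordsContaining P (e + 1) T)
      ≤ (Finsupp.supported ℤ ℤ (wordsContaining P (e + 1) (a :: T))).comap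
          (prependDefect P hP hcons a e) := by
    rw [Finsupp.supported_eq_span_single, Submodule.span_le]
    rintro _ ⟨w, hw, rfl⟩
    by_cases hm : a ∈ w.1
    · refine Finsupp.supported_mono ?_ (prependDefect_single_mem_supported_perm P hP hcons hm 1)
      intro v hv b hb
      rcases List.mem_cons.1 hb with rfl | hb
      exacts [hv.mem_iff.2 hm, hv.mem_iff.2 (hw b hb)]
    · simp [prependDefect_single_of_not_mem P hP hcons hm]
  exact hle hz

end Contraction

theorem exists_sub_wordBoundary_mem_supported_wordsContaining
    (hcons : ∀ (a : α) (l : List α), P l → a ∉ l → P (a :: l)) {e : ℕ}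
    {z : Word P (e + 1) →₀ ℤ} (hz : wordBoundary P hP e z = 0) (T : List α) :
    ∃ y, z - wordBoundary P hP (e + 1) y
      ∈ Finsupp.supported ℤ ℤ (wordsContaining P (e + 1) T) := by
  induction T with
  | nil => exact ⟨0, by simp [wordsContaining]⟩
  | cons a T ih =>
    obtain ⟨y, hy⟩ := ih
    set z' := z - wordBoundary P hP (e + 1) y
    have hz' : wordBoundary P hP e z' = 0 := by
      rw [map_sub, hz, zero_sub, neg_eq_zero]
      exact DFunLike.congr_fun (wordBoundary_comp_wordBoundary P hP e) y
    refine ⟨y + prependMap P hcons a (e + 1) z', ?_⟩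
    have hdefect : prependDefect P hP hcons a e z'
        = z - wordBoundary P hP (e + 1) (y + prependMap P hcons a (e + 1) z') := by
      simp only [prependDefect, LinearMap.sub_apply, LinearMap.add_apply, LinearMap.comp_apply,
        LinearMap.id_apply, hz', map_zero, add_zero, map_add, z']
      abel
    exact hdefect ▸ prependDefect_mem_supported_wordsContaining_cons P hP hcons hy

theorem wordsContaining_eq_empty_of_lt_card [Fintype α] {d : ℕ} {T : List α}
    (hT : ∀ b, b ∈ T) (hd : d < Fintype.card α) : wordsContaining P d T = ∅ := by
  classical
  refine Set.eq_empty_of_forall_notMem fun v hv => hd.not_ge ?_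
  calc Fintype.card α ≤ v.1.toFinset.card :=
        Finset.card_le_card fun b _ => List.mem_toFinset.2 (hv b (hT b))
    _ ≤ v.1.length := List.toFinset_card_le _
    _ = d := v.2.2

theorem exists_wordBoundary_eq_of_lt_card [Fintype α]
    (hcons : ∀ (a : α) (l : List α), P l → a ∉ l → P (a :: l)) {e : ℕ}
    (he : e + 1 < Fintype.card α) {z : Word P (e + 1) →₀ ℤ} (hz : wordBoundary P hP e z = 0) :
    ∃ y, wordBoundary P hP (e + 1) y = z := by
  obtain ⟨y, hy⟩ := exists_sub_wordBoundary_mem_supported_wordsContaining P hP hcons hz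
    (Finset.univ : Finset α).toList
  rw [wordsContaining_eq_empty_of_lt_card P (fun b => Finset.mem_toList.2 (Finset.mem_univ b))
    he, Finsupp.supported_empty, Submodule.mem_bot, sub_eq_zero] at hy
  exact ⟨y, hy.symm⟩

theorem wordComplex_d (e : ℕ) :
    (wordComplex P hP).d (e + 1) e = ModuleCat.ofHom (wordBoundary P hP e) :=
  ChainComplex.of_d (fun d => ModuleCat.of ℤ (Word P d →₀ ℤ))
    (fun d => ModuleCat.ofHom (wordBoundary P hP d)) e

theorem wordComplex_exactAt_zero_iff :
    (wordComplex P hP).ExactAt 0 ↔ Function.Surjective (wordBoundary P hP 0) := by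
  rw [HomologicalComplex.exactAt_iff' _ 1 0 0 (by simp) ChainComplex.next_nat_zero,
    ShortComplex.moduleCat_exact_iff]
  have hd0 : (wordComplex P hP).d 0 0 = 0 := (wordComplex P hP).shape _ _ (by simp)
  simp only [HomologicalComplex.shortComplexFunctor'_obj_f,
    HomologicalComplex.shortComplexFunctor'_obj_g, wordComplex_d, hd0]
  exact ⟨fun h z => h z rfl, fun h z _ => h z⟩

theorem wordComplex_exactAt_succ_iff (e : ℕ) :
    (wordComplex P hP).ExactAt (e + 1)
      ↔ ∀ z, wordBoundary P hP e z = 0 → ∃ y, wordBoundary P hP (e + 1) y = z := by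
  rw [HomologicalComplex.exactAt_iff' _ (e + 2) (e + 1) e (by simp) (by simp),
    ShortComplex.moduleCat_exact_iff]
  simp only [HomologicalComplex.shortComplexFunctor'_obj_f,
    HomologicalComplex.shortComplexFunctor'_obj_g, wordComplex_d]
  rfl

theorem wordComplex_exactAt_of_lt_card [Fintype α]
    (hcons : ∀ (a : α) (l : List α), P l → a ∉ l → P (a :: l))
    {d : ℕ} (hd : d < Fintype.card α) : (wordComplex P hP).ExactAt d := by
  cases d with
  | zero =>
    obtain ⟨a⟩ := Fintype.card_pos_iff.1 hd
    exact (wordComplex_exactAt_zero_iff P hP).2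
      fun z => ⟨_, wordBoundary_zero_prependMap P hP hcons a z⟩
  | succ e =>
    exact (wordComplex_exactAt_succ_iff P hP e).2
      fun _ hz => exists_wordBoundary_eq_of_lt_card P hP hcons hd hz

theorem wordComplex_exactAt_of_isEmpty {d : ℕ} [IsEmpty (Word P d)] :
    (wordComplex P hP).ExactAt d := by
  rw [HomologicalComplex.exactAt_iff]
  exact ShortComplex.exact_of_isZero_X₂ _
    (ModuleCat.isZero_of_subsingleton (ModuleCat.of ℤ (Word P d →₀ ℤ)))

theorem isEmpty_word_nodup [Fintype α] {d : ℕ} (hd : Fintype.card α < d) :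
    IsEmpty (Word (fun l : List α => l.Nodup) d) :=
  ⟨fun w => hd.not_ge (w.2.2 ▸ w.2.1.length_le_card)⟩

theorem injectiveWordsComplex_spherical_general (n : ℕ) (d : ℕ) (hd : d ≠ n) :
    Limits.IsZero ((wordComplex (fun l : List (Fin n) => l.Nodup)
      (fun l j h => (List.eraseIdx_sublist l j).nodup h)).homology d) := by
  rw [← HomologicalComplex.exactAt_iff_isZero_homology]
  rcases Nat.lt_or_gt_of_ne hd with hlt | hgt
  · exact wordComplex_exactAt_of_lt_card _ _ (fun a l hl ha => List.nodup_cons.2 ⟨ha, hl⟩)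
      (by rwa [Fintype.card_fin])
  · have := isEmpty_word_nodup (α := Fin n) (by rwa [Fintype.card_fin])
    exact wordComplex_exactAt_of_isEmpty _ _

/-- Homological sphericity of the complex of injective words: for `n ≥ 1`, the augmented
chain complex of injective words on `Fin n` (whose degree-`d` part is the free abelian
group on injective `d`-tuples, so that degree `d` corresponds to homological degree
`i = d - 1`, the empty word spanning the augmentation `ℤ` in degree `-1`) is exact in
every degree except `n`; i.e. the reduced homology `H̃_i` vanishes for `i ≠ n - 1`. -/
theorem injectiveWordsComplex_spherical (n : ℕ) (hn : 1 ≤ n) (d : ℕ) (hd : d ≠ n) :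
    Limits.IsZero ((wordComplex (fun l : List (Fin n) => l.Nodup)
      (fun l j h => (List.eraseIdx_sublist l j).nodup h)).homology d) :=
  injectiveWordsComplex_spherical_general n d hd
end

section
/- Let f : X → Y be a continuous map between topological spaces equipped with filtrations ∅ = X_{−1} ⊆ X_0 ⊆ X_1 ⊆ ⋯ ⊆ X_m = X and ∅ = Y_{−1} ⊆ Y_0 ⊆ Y_1 ⊆ ⋯ ⊆ Y_m = Y by subspaces, such that f(X_i) ⊆ Y_i for all i. If the induced map on relative singular homology f_* : H_j(X_i, X_{i−1}; ℤ) → H_j(Y_i, Y_{i−1}; ℤ) is an isomorphism for all i = 0, …, m and all j ≤ k+1, then f_* : H_j(X; ℤ) → H_j(Y; ℤ) is an isomorphism for all j ≤ k. -/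
/-!
Induct along the filtration: for each `i`, the long exact homology sequences of the pairs
`(X_i, X_{i-1})` and `(Y_i, Y_{i-1})` and the five lemma turn isomorphisms
`H_j(X_{i-1}) ≅ H_j(Y_{i-1})` for `j ≤ k` and `H_j(X_i, X_{i-1}) ≅ H_j(Y_i, Y_{i-1})` for
`j ≤ k + 1` (degree `k + 1` enters through the connecting map into `H_k(X_{i-1})`) into
isomorphisms `H_j(X_i) ≅ H_j(Y_i)` for `j ≤ k`. The induction starts at `X_{-1} = Y_{-1} = ∅`
and ends at `X_m = X`, `Y_m = Y`.
-/

open CategoryTheory AlgebraicTopology Limits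

/-- The singular chain complex of a topological space with `ℤ` coefficients: the
alternating face map complex of the levelwise free `ℤ`-module on the singular
simplicial set. -/
noncomputable def singularChains (X : TopCat) : ChainComplex (ModuleCat ℤ) ℕ :=
  (alternatingFaceMapComplex (ModuleCat ℤ)).obj
    (((SimplicialObject.whiskering _ _).obj (ModuleCat.free ℤ)).obj (TopCat.toSSet.obj X))

/-- The chain map induced by a continuous map. -/
noncomputable def singularChainsMap {X Y : TopCat} (f : X ⟶ Y) :
    singularChains X ⟶ singularChains Y :=
  (alternatingFaceMapComplex (ModuleCat ℤ)).map
    (((SimplicialObject.whiskering _ _).obj (ModuleCat.free ℤ)).map (TopCat.toSSet.map f))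

theorem singularChainsMap_comp {X Y Z : TopCat} (f : X ⟶ Y) (g : Y ⟶ Z) :
    singularChainsMap (f ≫ g) = singularChainsMap f ≫ singularChainsMap g := by
  simp [singularChainsMap, Functor.map_comp] <;> rfl

/-- The relative singular chain complex `C_*(B; ℤ)/C_*(A; ℤ)` of a pair of subspaces
`A ⊆ B` of an ambient space `X`, whose homology is the relative singular homology
`H_*(B, A; ℤ)`. -/
noncomputable def pairChains (X : Type) [TopologicalSpace X] (B A : Set X) (hAB : A ⊆ B) :
    ChainComplex (ModuleCat ℤ) ℕ :=
  cokernel (singularChainsMap (X := TopCat.of A) (Y := TopCat.of B)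
    (TopCat.ofHom ⟨fun a => ⟨a.1, hAB a.2⟩, Continuous.subtype_mk continuous_subtype_val _⟩))

/-- The map of relative singular chain complexes induced by a filtration-preserving
continuous map. -/
noncomputable def pairChainsMap {X Y : Type} [TopologicalSpace X] [TopologicalSpace Y]
    (f : C(X, Y)) (B A : Set X) (hAB : A ⊆ B) (B' A' : Set Y) (hAB' : A' ⊆ B')
    (hB : Set.MapsTo f B B') (hA : Set.MapsTo f A A') :
    pairChains X B A hAB ⟶ pairChains Y B' A' hAB' :=
  cokernel.map _ _
    (singularChainsMap (X := TopCat.of A) (Y := TopCat.of A')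
      (TopCat.ofHom ⟨fun a => ⟨f a.1, hA a.2⟩,
        Continuous.subtype_mk (f.continuous.comp continuous_subtype_val) _⟩))
    (singularChainsMap (X := TopCat.of B) (Y := TopCat.of B')
      (TopCat.ofHom ⟨fun b => ⟨f b.1, hB b.2⟩,
        Continuous.subtype_mk (f.continuous.comp continuous_subtype_val) _⟩))
    (by
      rw [← singularChainsMap_comp, ← singularChainsMap_comp]
      rfl)

open HomologicalComplex

namespace HomologicalComplex.HomologySequence

variable {C ι : Type*} [Category C] [Abelian C] {c : ComplexShape ι}
  {S₁ S₂ : ShortComplex (HomologicalComplex C c)}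

lemma mono_homologyMap_τ₂ (φ : S₁ ⟶ S₂) (hS₁ : S₁.ShortExact) (hS₂ : S₂.ShortExact) (j : ι)
    (h₁ : Mono (homologyMap φ.τ₁ j)) (h₃ : Mono (homologyMap φ.τ₃ j))
    (hprev : ∀ i, c.Rel i j → Epi (homologyMap φ.τ₃ i)) :
    Mono (homologyMap φ.τ₂ j) := by
  by_cases hi : ∃ i, c.Rel i j
  · obtain ⟨i, hij⟩ := hi
    apply Abelian.mono_of_epi_of_mono_of_mono
      ((ComposableArrows.δ₀Functor ⋙ ComposableArrows.δ₀Functor).map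
        (mapComposableArrows₅ φ hS₁ hS₂ i j hij))
    · exact (composableArrows₅_exact hS₁ i j hij).δ₀.δ₀
    · exact (composableArrows₅_exact hS₂ i j hij).δ₀.δ₀
    · exact hprev i hij
    · exact h₁
    · exact h₃
  · have := hS₂.mono_f
    refine Abelian.mono_of_mono_of_mono_of_mono (mapComposableArrows₂ φ j)
      (composableArrows₂_exact hS₁ j) ?_ h₁ h₃
    exact mono_homologyMap_of_mono_of_not_rel S₂.f j (by simpa using hi)

lemma epi_homologyMap_τ₂ (φ : S₁ ⟶ S₂) (hS₁ : S₁.ShortExact) (hS₂ : S₂.ShortExact) (j : ι)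
    (h₁ : Epi (homologyMap φ.τ₁ j)) (h₃ : Epi (homologyMap φ.τ₃ j))
    (hnext : ∀ l, c.Rel j l → Mono (homologyMap φ.τ₁ l)) :
    Epi (homologyMap φ.τ₂ j) := by
  by_cases hl : ∃ l, c.Rel j l
  · obtain ⟨l, hjl⟩ := hl
    apply Abelian.epi_of_epi_of_epi_of_mono
      ((ComposableArrows.δlastFunctor ⋙ ComposableArrows.δlastFunctor).map
        (mapComposableArrows₅ φ hS₁ hS₂ j l hjl))
    · exact (composableArrows₅_exact hS₁ j l hjl).δlast.δlast
    · exact (composableArrows₅_exact hS₂ j l hjl).δlast.δlast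
    · exact h₁
    · exact h₃
    · exact hnext l hjl
  · have := hS₁.epi_g
    refine Abelian.epi_of_epi_of_epi_of_epi (mapComposableArrows₂ φ j)
      (composableArrows₂_exact hS₂ j) ?_ h₁ h₃
    exact epi_homologyMap_of_epi_of_not_rel S₁.g j (by simpa using hl)

lemma isIso_homologyMap_τ₂ (φ : S₁ ⟶ S₂) (hS₁ : S₁.ShortExact) (hS₂ : S₂.ShortExact) (j : ι)
    (h₁ : IsIso (homologyMap φ.τ₁ j)) (h₃ : IsIso (homologyMap φ.τ₃ j))
    (hprev : ∀ i, c.Rel i j → IsIso (homologyMap φ.τ₃ i))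
    (hnext : ∀ l, c.Rel j l → IsIso (homologyMap φ.τ₁ l)) :
    IsIso (homologyMap φ.τ₂ j) := by
  have := mono_homologyMap_τ₂ φ hS₁ hS₂ j inferInstance inferInstance
    (fun i hij => have := hprev i hij; inferInstance)
  have := epi_homologyMap_τ₂ φ hS₁ hS₂ j inferInstance inferInstance
    (fun l hjl => have := hnext l hjl; inferInstance)
  exact isIso_of_mono_of_epi _

end HomologicalComplex.HomologySequence

lemma mono_singularChainsMap_of_injective {A B : TopCat} (g : A ⟶ B)
    (hg : Function.Injective g) : Mono (singularChainsMap g) := by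
  refine mono_of_mono_f _ fun n => (ModuleCat.mono_iff_injective _).2 ?_
  refine Finsupp.mapDomain_injective fun ⟨σ⟩ ⟨τ⟩ h => ?_
  congr 1
  exact TopCat.ext fun x => hg (ConcreteCategory.congr_hom (congrArg ULift.down h) x)

lemma isIso_homologyMap_singularChainsMap {A B : TopCat} (g : A ⟶ B) [IsIso g] (j : ℕ) :
    IsIso (homologyMap (singularChainsMap g) j) :=
  (TopCat.toSSet ⋙ (SimplicialObject.whiskering _ _).obj (ModuleCat.free ℤ) ⋙
    alternatingFaceMapComplex (ModuleCat ℤ) ⋙ homologyFunctor _ _ j).map_isIso g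

section Subspaces

variable {X Y : Type} [TopologicalSpace X] [TopologicalSpace Y]

noncomputable def subspaceInclusion {A B : Set X} (hAB : A ⊆ B) : TopCat.of A ⟶ TopCat.of B :=
  TopCat.ofHom ⟨fun a => ⟨a.1, hAB a.2⟩, Continuous.subtype_mk continuous_subtype_val _⟩

noncomputable def subspaceMap (f : C(X, Y)) {A : Set X} {A' : Set Y} (h : Set.MapsTo f A A') :
    TopCat.of A ⟶ TopCat.of A' :=
  TopCat.ofHom ⟨fun a => ⟨f a.1, h a.2⟩,
    Continuous.subtype_mk (f.continuous.comp continuous_subtype_val) _⟩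

lemma isIso_subspaceMap_of_isEmpty (f : C(X, Y)) {A : Set X} {A' : Set Y}
    (h : Set.MapsTo f A A') [IsEmpty A] [IsEmpty A'] : IsIso (subspaceMap f h) := by
  rw [TopCat.isIso_iff_isHomeomorph]
  convert (Homeomorph.empty (X := A) (Y := A')).isHomeomorph using 1

noncomputable def subspaceVal (A : Set X) : TopCat.of A ⟶ TopCat.of X :=
  TopCat.ofHom ⟨Subtype.val, continuous_subtype_val⟩

lemma subspaceMap_comp_subspaceVal (f : C(X, Y)) {A : Set X} {A' : Set Y}
    (h : Set.MapsTo f A A') : subspaceMap f h ≫ subspaceVal A' = subspaceVal A ≫ TopCat.ofHom f :=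
  rfl

lemma isIso_subspaceVal_of_eq_univ {A : Set X} (h : A = Set.univ) : IsIso (subspaceVal A) :=
  (TopCat.isIso_iff_isHomeomorph _).2
    ((Homeomorph.setCongr h).trans (Homeomorph.Set.univ X)).isHomeomorph

noncomputable def pairShortComplex (B A : Set X) (hAB : A ⊆ B) :
    ShortComplex (ChainComplex (ModuleCat ℤ) ℕ) :=
  ShortComplex.mk (singularChainsMap (subspaceInclusion hAB))
    (cokernel.π _ : _ ⟶ pairChains X B A hAB) (cokernel.condition _)

lemma pairShortComplex_shortExact (B A : Set X) (hAB : A ⊆ B) :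
    (pairShortComplex B A hAB).ShortExact := by
  have : Mono (pairShortComplex B A hAB).f :=
    mono_singularChainsMap_of_injective _ (Set.inclusion_injective hAB)
  have : Epi (pairShortComplex B A hAB).g := coequalizer.π_epi
  exact { exact := ShortComplex.exact_of_g_is_cokernel _ (cokernelIsCokernel _) }

noncomputable def pairShortComplexMap (f : C(X, Y)) (B A : Set X) (hAB : A ⊆ B)
    (B' A' : Set Y) (hAB' : A' ⊆ B') (hB : Set.MapsTo f B B') (hA : Set.MapsTo f A A') :
    pairShortComplex B A hAB ⟶ pairShortComplex B' A' hAB' where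
  τ₁ := singularChainsMap (subspaceMap f hA)
  τ₂ := singularChainsMap (subspaceMap f hB)
  τ₃ := pairChainsMap f B A hAB B' A' hAB' hB hA
  comm₁₂ := by
    simp only [pairShortComplex, ← singularChainsMap_comp]
    rfl
  comm₂₃ := (cokernel.π_desc _ _ _).symm

lemma isIso_homologyMap_subspaceMap_of_pair (f : C(X, Y)) (k : ℕ) (B A : Set X) (hAB : A ⊆ B)
    (B' A' : Set Y) (hAB' : A' ⊆ B') (hB : Set.MapsTo f B B') (hA : Set.MapsTo f A A')
    (hsub : ∀ j ≤ k, IsIso (homologyMap (singularChainsMap (subspaceMap f hA)) j))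
    (hpair : ∀ j ≤ k + 1, IsIso (homologyMap (pairChainsMap f B A hAB B' A' hAB' hB hA) j)) :
    ∀ j ≤ k, IsIso (homologyMap (singularChainsMap (subspaceMap f hB)) j) := fun j hj =>
  HomologySequence.isIso_homologyMap_τ₂ (pairShortComplexMap f B A hAB B' A' hAB' hB hA)
    (pairShortComplex_shortExact B A hAB) (pairShortComplex_shortExact B' A' hAB') j
    (hsub j hj) (hpair j (by omega))
    (fun i hij => hpair i (by simp only [ComplexShape.down_Rel] at hij; omega))
    (fun l hjl => hsub l (by simp only [ComplexShape.down_Rel] at hjl; omega))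

lemma isIso_homologyMap_subspaceMap_of_filtration (f : C(X, Y)) (k m : ℕ)
    (FX : ℕ → Set X) (FY : ℕ → Set Y) (hmX : Monotone FX) (hmY : Monotone FY)
    (hX0 : FX 0 = ∅) (hY0 : FY 0 = ∅) (hf : ∀ i, Set.MapsTo f (FX i) (FY i))
    (hiso : ∀ i ≤ m, ∀ j ≤ k + 1, IsIso (homologyMap
        (pairChainsMap f (FX (i + 1)) (FX i) (hmX (Nat.le_succ i))
          (FY (i + 1)) (FY i) (hmY (Nat.le_succ i)) (hf (i + 1)) (hf i)) j)) :
    ∀ i ≤ m + 1, ∀ j ≤ k, IsIso (homologyMap (singularChainsMap (subspaceMap f (hf i))) j) := by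
  intro i
  induction i with
  | zero =>
    intro _ j _
    have : IsEmpty (FX 0) := Set.isEmpty_coe_sort.2 hX0
    have : IsEmpty (FY 0) := Set.isEmpty_coe_sort.2 hY0
    have := isIso_subspaceMap_of_isEmpty f (hf 0)
    exact isIso_homologyMap_singularChainsMap _ j
  | succ i ih =>
    intro hi
    exact isIso_homologyMap_subspaceMap_of_pair f k _ _ _ _ _ _ _ _
      (ih (by omega)) (hiso i (by omega))

end Subspaces

/-- The filtrations are indexed by `ℕ`: `FX 0 = ∅` plays the role of `X_{-1}` and
`FX (i + 1)` that of `X_i`. -/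
theorem singular_homology_iso_of_filtration_iso
    {X Y : Type} [TopologicalSpace X] [TopologicalSpace Y] (f : C(X, Y)) (k m : ℕ)
    (FX : ℕ → Set X) (FY : ℕ → Set Y) (hmX : Monotone FX) (hmY : Monotone FY)
    (hX0 : FX 0 = ∅) (hY0 : FY 0 = ∅)
    (hXtop : FX (m + 1) = Set.univ) (hYtop : FY (m + 1) = Set.univ)
    (hf : ∀ i, Set.MapsTo f (FX i) (FY i))
    (hiso : ∀ i ≤ m, ∀ j ≤ k + 1,
      Function.Bijective (HomologicalComplex.homologyMap
        (pairChainsMap f (FX (i + 1)) (FX i) (hmX (Nat.le_succ i))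
          (FY (i + 1)) (FY i) (hmY (Nat.le_succ i)) (hf (i + 1)) (hf i)) j)) :
    ∀ j ≤ k, Function.Bijective (HomologicalComplex.homologyMap
      (singularChainsMap (X := TopCat.of X) (Y := TopCat.of Y) (TopCat.ofHom f)) j) := by
  intro j hj
  have hσ := isIso_homologyMap_subspaceMap_of_filtration f k m FX FY hmX hmY hX0 hY0 hf
    (fun i hi j hj => (ConcreteCategory.isIso_iff_bijective _).2 (hiso i hi j hj)) (m + 1) le_rfl j hj
  have := isIso_subspaceVal_of_eq_univ hXtop
  have := isIso_subspaceVal_of_eq_univ hYtop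
  have hX := isIso_homologyMap_singularChainsMap (subspaceVal (FX (m + 1))) j
  have hY := isIso_homologyMap_singularChainsMap (subspaceVal (FY (m + 1))) j
  have hcomp : IsIso (homologyMap (singularChainsMap (subspaceVal (FX (m + 1)))) j ≫
      homologyMap (singularChainsMap (TopCat.ofHom f)) j) := by
    rw [← homologyMap_comp, ← singularChainsMap_comp, ← subspaceMap_comp_subspaceVal f (hf _),
      singularChainsMap_comp, homologyMap_comp]
    infer_instance
  rw [← ConcreteCategory.isIso_iff_bijective]
  exact IsIso.of_isIso_comp_left (homologyMap (singularChainsMap (subspaceVal (FX (m + 1)))) j) _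
end
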